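/- arXiv:1910.08653 — 2 statements merged into one kernel-verified Lean document; each statement's English description precedes it below -/
import Mathlib

section
/- Let T = (c₁,…,c₆,f₁,f₂,f₃,f₄,t₁,t₂) and T′ = (c₁,…,c₆,f₁′,f₂′,f₃′,f₄′,t₁′,t₂′) be tuples in ℤ¹² with the same c-coordinates, and suppose c₁, c₂, c₃ are pairwise relatively prime (gcd(c₁,c₂) = gcd(c₂,c₃) = gcd(c₁,c₃) = 1). Then T and T′ are ψ-equivalent if and only if c₁c₂f₃ + c₁c₃f₂ + c₂c₃f₁ + c₂c₅f₄ ≡ c₁c₂f₃′ + c₁c₃f₂′ + c₂c₃f₁′ + c₂c₅f₄′ (mod gcd(c₁c₄−c₂c₅, c₁c₄−c₃c₆)), where the congruence modulo 0 means equality. -/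
/-- A 12-tuple of integers, with coordinates written `(c₁,…,c₆,f₁,…,f₄,t₁,t₂)`. -/
structure Tuple : Type where
  c1 : ℤ
  c2 : ℤ
  c3 : ℤ
  c4 : ℤ
  c5 : ℤ
  c6 : ℤ
  f1 : ℤ
  f2 : ℤ
  f3 : ℤ
  f4 : ℤ
  t1 : ℤ
  t2 : ℤ

/-- The move ψ₂₁ : f₃↦f₃+c₅, f₄↦f₄−c₁, t₁↦t₁+f₁. -/
def psi21 : Equiv.Perm Tuple where
  toFun x := { x with f3 := x.f3 + x.c5, f4 := x.f4 - x.c1, t1 := x.t1 + x.f1 }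
  invFun x := { x with f3 := x.f3 - x.c5, f4 := x.f4 + x.c1, t1 := x.t1 - x.f1 }
  left_inv x := by cases x; simp
  right_inv x := by cases x; simp

/-- The move ψ₄₁ : f₂↦f₂+c₆, f₃↦f₃−c₅, t₂↦t₂−f₁. -/
def psi41 : Equiv.Perm Tuple where
  toFun x := { x with f2 := x.f2 + x.c6, f3 := x.f3 - x.c5, t2 := x.t2 - x.f1 }
  invFun x := { x with f2 := x.f2 - x.c6, f3 := x.f3 + x.c5, t2 := x.t2 + x.f1 }
  left_inv x := by cases x; simp
  right_inv x := by cases x; simp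

/-- The move ψ₁₂ : f₃↦f₃−c₄, f₄↦f₄+c₂, t₁↦t₁+f₂. -/
def psi12 : Equiv.Perm Tuple where
  toFun x := { x with f3 := x.f3 - x.c4, f4 := x.f4 + x.c2, t1 := x.t1 + x.f2 }
  invFun x := { x with f3 := x.f3 + x.c4, f4 := x.f4 - x.c2, t1 := x.t1 - x.f2 }
  left_inv x := by cases x; simp
  right_inv x := by cases x; simp

/-- The move ψ₃₂ : f₁↦f₁+c₆, f₄↦f₄−c₂, t₂↦t₂−f₂. -/
def psi32 : Equiv.Perm Tuple where
  toFun x := { x with f1 := x.f1 + x.c6, f4 := x.f4 - x.c2, t2 := x.t2 - x.f2 }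
  invFun x := { x with f1 := x.f1 - x.c6, f4 := x.f4 + x.c2, t2 := x.t2 + x.f2 }
  left_inv x := by cases x; simp
  right_inv x := by cases x; simp

/-- The move ψ₄₃ : f₁↦f₁+c₅, f₂↦f₂−c₄, t₁↦t₁+f₃. -/
def psi43 : Equiv.Perm Tuple where
  toFun x := { x with f1 := x.f1 + x.c5, f2 := x.f2 - x.c4, t1 := x.t1 + x.f3 }
  invFun x := { x with f1 := x.f1 - x.c5, f2 := x.f2 + x.c4, t1 := x.t1 - x.f3 }
  left_inv x := by cases x; simp
  right_inv x := by cases x; simp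

/-- The move ψ₂₃ : f₁↦f₁−c₅, f₄↦f₄+c₃, t₂↦t₂−f₃. -/
def psi23 : Equiv.Perm Tuple where
  toFun x := { x with f1 := x.f1 - x.c5, f4 := x.f4 + x.c3, t2 := x.t2 - x.f3 }
  invFun x := { x with f1 := x.f1 + x.c5, f4 := x.f4 - x.c3, t2 := x.t2 + x.f3 }
  left_inv x := by cases x; simp
  right_inv x := by cases x; simp

/-- The move ψ₃₄ : f₁↦f₁−c₁, f₂↦f₂+c₂, t₁↦t₁+f₄. -/
def psi34 : Equiv.Perm Tuple where
  toFun x := { x with f1 := x.f1 - x.c1, f2 := x.f2 + x.c2, t1 := x.t1 + x.f4 }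
  invFun x := { x with f1 := x.f1 + x.c1, f2 := x.f2 - x.c2, t1 := x.t1 - x.f4 }
  left_inv x := by cases x; simp
  right_inv x := by cases x; simp

/-- The move ψ₁₄ : f₂↦f₂−c₂, f₃↦f₃+c₃, t₂↦t₂−f₄. -/
def psi14 : Equiv.Perm Tuple where
  toFun x := { x with f2 := x.f2 - x.c2, f3 := x.f3 + x.c3, t2 := x.t2 - x.f4 }
  invFun x := { x with f2 := x.f2 + x.c2, f3 := x.f3 - x.c3, t2 := x.t2 + x.f4 }
  left_inv x := by cases x; simp
  right_inv x := by cases x; simp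

/-- The list of the eight ψ-moves. -/
def psiMoves : List (Equiv.Perm Tuple) :=
  [psi21, psi41, psi12, psi32, psi43, psi23, psi34, psi14]

/-- Two tuples are ψ-equivalent if one is obtained from the other by a finite
composition of the eight ψ-moves and their inverses, i.e. they are related by the
equivalence relation generated by single applications of the moves. -/
def PsiEquiv : Tuple → Tuple → Prop :=
  Relation.EqvGen (fun x y => ∃ g ∈ psiMoves, g x = y)

/-!
Each move translates `f` by a vector depending only on `c` and shears `t` by a coordinate of `f`.
So `f' - f` lies in the lattice `L` spanned by the eight translation vectors, and the weight
`c₂c₃f₁ + c₁c₃f₂ + c₁c₂f₃ + c₂c₅f₄` sends each of them into `gcd(c₁c₄ - c₂c₅, c₁c₄ - c₃c₆) ℤ`.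

Conversely, two moves commute up to a translation of `t` alone; the commutators of `ψ₁₄` with
`ψ₂₁`, `ψ₁₂`, `ψ₄₃` give `(0, -c₁)`, `(-c₂, c₂)`, `(c₃, 0)`, which span `ℤ²` when `c₁, c₂, c₃` are
pairwise coprime. So `t` is free, every vector of `L` is a reachable translation of `f`, and it
remains to see that `L` is the whole preimage of `gcd · ℤ` under the weight: `L` contains `gcd · eᵢ`
for `i = 1, 2, 3` and a vector with last coordinate `-1`, and in the first three coordinates a
Bézout vector of `(c₂c₃, c₁c₃, c₁c₂)` completes `v₃₄, v₁₄` to a basis of `ℤ³`.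
-/

theorem AddSubgroup.gcd_zsmul_mem {G : Type*} [AddCommGroup G] {H : AddSubgroup G} {a b : ℤ}
    {v : G} (ha : a • v ∈ H) (hb : b • v ∈ H) : (Int.gcd a b : ℤ) • v ∈ H := by
  rw [Int.gcd_eq_gcd_ab, add_smul, mul_comm a, mul_comm b, mul_smul, mul_smul]
  exact add_mem (zsmul_mem ha _) (zsmul_mem hb _)

theorem AddSubgroup.mem_of_isCoprime {G : Type*} [AddCommGroup G] {H : AddSubgroup G} {a b : ℤ}
    {v : G} (hab : IsCoprime a b) (ha : a • v ∈ H) (hb : b • v ∈ H) : v ∈ H := by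
  simpa [Int.isCoprime_iff_gcd_eq_one.mp hab] using AddSubgroup.gcd_zsmul_mem ha hb

theorem AddSubgroup.eq_top_of_mem_of_isCoprime {H : AddSubgroup (ℤ × ℤ)} {a b c : ℤ}
    (ha : (0, a) ∈ H) (hb : (b, -b) ∈ H) (hc : (c, 0) ∈ H) (hab : IsCoprime a b)
    (habc : IsCoprime c (a * b)) : H = ⊤ := by
  have e₁ : ((1 : ℤ), (0 : ℤ)) ∈ H := by
    refine H.mem_of_isCoprime habc (by simpa using hc) ?_
    have : (a * b) • ((1 : ℤ), (0 : ℤ)) = a • (b, -b) + b • (0, a) := by ext <;> simp; ring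
    rw [this]
    exact add_mem (zsmul_mem hb a) (zsmul_mem ha b)
  have e₂ : ((0 : ℤ), (1 : ℤ)) ∈ H := by
    refine H.mem_of_isCoprime hab (by simpa using ha) ?_
    have : b • ((0 : ℤ), (1 : ℤ)) = b • ((1 : ℤ), (0 : ℤ)) - (b, -b) := by ext <;> simp
    rw [this]
    exact sub_mem (zsmul_mem e₁ b) hb
  refine eq_top_iff.2 fun p _ => ?_
  simpa using add_mem (zsmul_mem e₁ p.1) (zsmul_mem e₂ p.2)

lemma PsiEquiv.refl (x : Tuple) : PsiEquiv x x := Relation.EqvGen.refl x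

lemma PsiEquiv.symm {x y : Tuple} (h : PsiEquiv x y) : PsiEquiv y x := Relation.EqvGen.symm x y h

lemma PsiEquiv.trans {x y z : Tuple} (h : PsiEquiv x y) (h' : PsiEquiv y z) : PsiEquiv x z :=
  Relation.EqvGen.trans x y z h h'

lemma PsiEquiv.of_mem_psiMoves {g : Equiv.Perm Tuple} (hg : g ∈ psiMoves) (x : Tuple) :
    PsiEquiv x (g x) :=
  .rel _ _ ⟨g, hg, rfl⟩

lemma PsiEquiv.of_comm {g h : Equiv.Perm Tuple} (hg : g ∈ psiMoves) (hh : h ∈ psiMoves)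
    {y z : Tuple} (e : g (h y) = h (g z)) : PsiEquiv y z :=
  ((PsiEquiv.of_mem_psiMoves hh y).trans (e ▸ PsiEquiv.of_mem_psiMoves hg (h y))).trans
    ((PsiEquiv.of_mem_psiMoves hh (g z)).symm.trans (PsiEquiv.of_mem_psiMoves hg z).symm)

namespace Tuple

def fVec (x : Tuple) : Fin 4 → ℤ := ![x.f1, x.f2, x.f3, x.f4]

def withFT (x : Tuple) (f : Fin 4 → ℤ) (t : ℤ × ℤ) : Tuple :=
  { x with f1 := f 0, f2 := f 1, f3 := f 2, f4 := f 3, t1 := t.1, t2 := t.2 }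

@[simp] lemma fVec_withFT (x : Tuple) (f : Fin 4 → ℤ) (t : ℤ × ℤ) : (x.withFT f t).fVec = f := by
  ext i; fin_cases i <;> rfl

lemma withFT_fVec (x : Tuple) : x.withFT x.fVec (x.t1, x.t2) = x := rfl

section Moves

variable (x : Tuple) (f : Fin 4 → ℤ) (t : ℤ × ℤ)

lemma psi21_withFT :
    psi21 (x.withFT f t) = x.withFT (f + ![0, 0, x.c5, -x.c1]) (t + (f 0, 0)) := by
  simp [withFT, psi21, sub_eq_add_neg]

lemma psi41_withFT :
    psi41 (x.withFT f t) = x.withFT (f + ![0, x.c6, -x.c5, 0]) (t - (0, f 0)) := by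
  simp [withFT, psi41, sub_eq_add_neg]

lemma psi12_withFT :
    psi12 (x.withFT f t) = x.withFT (f + ![0, 0, -x.c4, x.c2]) (t + (f 1, 0)) := by
  simp [withFT, psi12, sub_eq_add_neg]

lemma psi32_withFT :
    psi32 (x.withFT f t) = x.withFT (f + ![x.c6, 0, 0, -x.c2]) (t - (0, f 1)) := by
  simp [withFT, psi32, sub_eq_add_neg]

lemma psi43_withFT :
    psi43 (x.withFT f t) = x.withFT (f + ![x.c5, -x.c4, 0, 0]) (t + (f 2, 0)) := by
  simp [withFT, psi43, sub_eq_add_neg]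

lemma psi23_withFT :
    psi23 (x.withFT f t) = x.withFT (f + ![-x.c5, 0, 0, x.c3]) (t - (0, f 2)) := by
  simp [withFT, psi23, sub_eq_add_neg]

lemma psi34_withFT :
    psi34 (x.withFT f t) = x.withFT (f + ![-x.c1, x.c2, 0, 0]) (t + (f 3, 0)) := by
  simp [withFT, psi34, sub_eq_add_neg]

lemma psi14_withFT :
    psi14 (x.withFT f t) = x.withFT (f + ![0, -x.c2, x.c3, 0]) (t - (0, f 3)) := by
  simp [withFT, psi14, sub_eq_add_neg]

end Moves

-- `vᵢⱼ`, the translation of `f` by `ψᵢⱼ`, in the order of `psiMoves`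
def moveShifts (x : Tuple) : Set (Fin 4 → ℤ) :=
  {![0, 0, x.c5, -x.c1], ![0, x.c6, -x.c5, 0], ![0, 0, -x.c4, x.c2], ![x.c6, 0, 0, -x.c2],
   ![x.c5, -x.c4, 0, 0], ![-x.c5, 0, 0, x.c3], ![-x.c1, x.c2, 0, 0], ![0, -x.c2, x.c3, 0]}

def moveLattice (x : Tuple) : AddSubgroup (Fin 4 → ℤ) := AddSubgroup.closure x.moveShifts

lemma moveLattice_withFT (x : Tuple) (f : Fin 4 → ℤ) (t : ℤ × ℤ) :
    (x.withFT f t).moveLattice = x.moveLattice :=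
  rfl

lemma exists_apply_withFT_eq {g : Equiv.Perm Tuple} (hg : g ∈ psiMoves) (x : Tuple)
    (f : Fin 4 → ℤ) (t : ℤ × ℤ) :
    ∃ v ∈ x.moveShifts, ∃ s, g (x.withFT f t) = x.withFT (f + v) s := by
  simp only [psiMoves, List.mem_cons, List.not_mem_nil, or_false] at hg
  rcases hg with rfl | rfl | rfl | rfl | rfl | rfl | rfl | rfl
  exacts [⟨_, by simp [moveShifts], _, psi21_withFT x f t⟩,
    ⟨_, by simp [moveShifts], _, psi41_withFT x f t⟩,
    ⟨_, by simp [moveShifts], _, psi12_withFT x f t⟩,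
    ⟨_, by simp [moveShifts], _, psi32_withFT x f t⟩,
    ⟨_, by simp [moveShifts], _, psi43_withFT x f t⟩,
    ⟨_, by simp [moveShifts], _, psi23_withFT x f t⟩,
    ⟨_, by simp [moveShifts], _, psi34_withFT x f t⟩,
    ⟨_, by simp [moveShifts], _, psi14_withFT x f t⟩]

lemma exists_mem_psiMoves_of_mem_moveShifts {x : Tuple} {v : Fin 4 → ℤ} (hv : v ∈ x.moveShifts)
    (f : Fin 4 → ℤ) (t : ℤ × ℤ) :
    ∃ g ∈ psiMoves, ∃ s, g (x.withFT f t) = x.withFT (f + v) s := by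
  simp only [moveShifts, Set.mem_insert_iff, Set.mem_singleton_iff] at hv
  rcases hv with rfl | rfl | rfl | rfl | rfl | rfl | rfl | rfl
  exacts [⟨_, by simp [psiMoves], _, psi21_withFT x f t⟩,
    ⟨_, by simp [psiMoves], _, psi41_withFT x f t⟩,
    ⟨_, by simp [psiMoves], _, psi12_withFT x f t⟩,
    ⟨_, by simp [psiMoves], _, psi32_withFT x f t⟩,
    ⟨_, by simp [psiMoves], _, psi43_withFT x f t⟩,
    ⟨_, by simp [psiMoves], _, psi23_withFT x f t⟩,
    ⟨_, by simp [psiMoves], _, psi34_withFT x f t⟩,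
    ⟨_, by simp [psiMoves], _, psi14_withFT x f t⟩]

lemma moveLattice_eq_of_psiEquiv {x y : Tuple} (h : PsiEquiv x y) :
    y.moveLattice = x.moveLattice := by
  induction h with
  | rel x _ hxy =>
    obtain ⟨g, hg, rfl⟩ := hxy
    obtain ⟨v, -, s, hs⟩ := exists_apply_withFT_eq hg x x.fVec (x.t1, x.t2)
    rw [withFT_fVec] at hs
    rw [hs, moveLattice_withFT]
  | refl => rfl
  | symm _ _ _ ih => exact ih.symm
  | trans _ _ _ _ _ ih₁ ih₂ => exact ih₂.trans ih₁

lemma fVec_sub_mem_of_psiEquiv {x y : Tuple} (h : PsiEquiv x y) :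
    y.fVec - x.fVec ∈ x.moveLattice := by
  induction h with
  | rel x _ hxy =>
    obtain ⟨g, hg, rfl⟩ := hxy
    obtain ⟨v, hv, s, hs⟩ := exists_apply_withFT_eq hg x x.fVec (x.t1, x.t2)
    rw [withFT_fVec] at hs
    rw [hs, fVec_withFT, add_sub_cancel_left]
    exact AddSubgroup.subset_closure hv
  | refl => simp
  | symm x y hxy ih =>
    rw [moveLattice_eq_of_psiEquiv hxy, ← neg_sub]
    exact neg_mem ih
  | trans x y z hxy _ ih₁ ih₂ =>
    rw [← sub_add_sub_cancel]
    exact add_mem (moveLattice_eq_of_psiEquiv hxy ▸ ih₂) ih₁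

def reachableShifts (x : Tuple) : AddSubgroup ((Fin 4 → ℤ) × (ℤ × ℤ)) where
  carrier := {p | ∀ f t, PsiEquiv (x.withFT f t) (x.withFT (f + p.1) (t + p.2))}
  zero_mem' _ _ := by simpa using .refl _
  add_mem' {p q} hp hq f t := by
    simpa [add_assoc] using (hp f t).trans (hq (f + p.1) (t + p.2))
  neg_mem' {p} hp f t := by
    simpa [← sub_eq_add_neg] using (hp (f - p.1) (t - p.2)).symm

lemma mem_reachableShifts_of_comm {x : Tuple} {g h : Equiv.Perm Tuple} (hg : g ∈ psiMoves)
    (hh : h ∈ psiMoves) {s : ℤ × ℤ} (e : ∀ f t, g (h (x.withFT f t)) = h (g (x.withFT f (t + s)))) :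
    (0, s) ∈ x.reachableShifts := fun f t => by
  simpa using PsiEquiv.of_comm hg hh (e f t)

lemma mem_reachableShifts_zero {x : Tuple} (h12 : IsCoprime x.c1 x.c2)
    (h312 : IsCoprime x.c3 (x.c1 * x.c2)) (s : ℤ × ℤ) : (0, s) ∈ x.reachableShifts := by
  have h1 : (0, (0, -x.c1)) ∈ x.reachableShifts :=
    mem_reachableShifts_of_comm (g := psi21) (h := psi14) (by simp [psiMoves]) (by simp [psiMoves])
      fun f t => by
        simp only [psi14_withFT, psi21_withFT]
        rw [add_right_comm f]
        congr 1
        ext <;> simp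
  have h2 : (0, (-x.c2, x.c2)) ∈ x.reachableShifts :=
    mem_reachableShifts_of_comm (g := psi12) (h := psi14) (by simp [psiMoves]) (by simp [psiMoves])
      fun f t => by
        simp only [psi14_withFT, psi12_withFT]
        rw [add_right_comm f]
        congr 1
        ext
        · simp; ring
        · simp
  have h3 : (0, (x.c3, 0)) ∈ x.reachableShifts :=
    mem_reachableShifts_of_comm (g := psi43) (h := psi14) (by simp [psiMoves]) (by simp [psiMoves])
      fun f t => by
        simp only [psi14_withFT, psi43_withFT]
        rw [add_right_comm f]
        congr 1
        ext
        · simp; ring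
        · simp
  have hT := AddSubgroup.eq_top_of_mem_of_isCoprime (H := x.reachableShifts.comap (.inr _ _))
    (by simpa using neg_mem h1) (by simpa using neg_mem h2) (by simpa using h3) h12 h312
  have hs : s ∈ x.reachableShifts.comap (.inr _ _) := hT ▸ AddSubgroup.mem_top s
  simpa using hs

lemma moveLattice_le_reachableShifts {x : Tuple} (h12 : IsCoprime x.c1 x.c2)
    (h312 : IsCoprime x.c3 (x.c1 * x.c2)) :
    x.moveLattice ≤ x.reachableShifts.comap (.inl _ _) := by
  refine (AddSubgroup.closure_le _).2 fun v hv f t => ?_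
  obtain ⟨g, hg, s, hs⟩ := exists_mem_psiMoves_of_mem_moveShifts hv f t
  have hmove := PsiEquiv.of_mem_psiMoves hg (x.withFT f t)
  rw [hs] at hmove
  simpa using hmove.trans (mem_reachableShifts_zero h12 h312 (t - s) (f + v) s)

theorem psiEquiv_withFT_iff {x : Tuple} (h12 : IsCoprime x.c1 x.c2)
    (h312 : IsCoprime x.c3 (x.c1 * x.c2)) (f : Fin 4 → ℤ) (t : ℤ × ℤ) :
    PsiEquiv x (x.withFT f t) ↔ f - x.fVec ∈ x.moveLattice := by
  refine ⟨fun h => by simpa using fVec_sub_mem_of_psiEquiv h, fun h => ?_⟩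
  have := add_mem (AddSubgroup.mem_comap.1 (moveLattice_le_reachableShifts h12 h312 h))
    (mem_reachableShifts_zero h12 h312 (t - (x.t1, x.t2)))
  simpa [withFT_fVec] using this x.fVec (x.t1, x.t2)

def weight (x : Tuple) : (Fin 4 → ℤ) →+ ℤ where
  toFun d := x.c2 * x.c3 * d 0 + x.c1 * x.c3 * d 1 + x.c1 * x.c2 * d 2 + x.c2 * x.c5 * d 3
  map_zero' := by simp
  map_add' _ _ := by simp only [Pi.add_apply]; ring

def modulus (x : Tuple) : ℤ := Int.gcd (x.c1 * x.c4 - x.c2 * x.c5) (x.c1 * x.c4 - x.c3 * x.c6)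

lemma moveLattice_le_comap_weight (x : Tuple) :
    x.moveLattice ≤ (AddSubgroup.zmultiples x.modulus).comap x.weight := by
  have key : ∀ v p q,
      x.weight v = p * (x.c1 * x.c4 - x.c2 * x.c5) + q * (x.c1 * x.c4 - x.c3 * x.c6) →
      x.weight v ∈ AddSubgroup.zmultiples x.modulus := fun v p q h => by
    rw [h, Int.mem_zmultiples_iff]
    exact (Int.gcd_dvd_left _ _).linear_comb (Int.gcd_dvd_right _ _) p q
  refine (AddSubgroup.closure_le _).2 ?_
  simp only [moveShifts, Set.insert_subset_iff, Set.singleton_subset_iff, SetLike.mem_coe,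
    AddSubgroup.mem_comap]
  refine ⟨key _ 0 0 ?_, key _ x.c1 (-x.c1) ?_, key _ (-x.c2) 0 ?_, key _ x.c2 (-x.c2) ?_,
    key _ (-x.c3) 0 ?_, key _ 0 0 ?_, key _ 0 0 ?_, key _ 0 0 ?_⟩ <;> simp [weight] <;> ring

lemma modulus_smul_single_mem (x : Tuple) {i : Fin 4} (hi : i ≠ 3) :
    x.modulus • Pi.single i 1 ∈ x.moveLattice := by
  have gen : ∀ v ∈ x.moveShifts, v ∈ x.moveLattice := fun v hv => AddSubgroup.subset_closure hv
  have h21 := gen ![0, 0, x.c5, -x.c1] (by simp [moveShifts])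
  have h41 := gen ![0, x.c6, -x.c5, 0] (by simp [moveShifts])
  have h12 := gen ![0, 0, -x.c4, x.c2] (by simp [moveShifts])
  have h32 := gen ![x.c6, 0, 0, -x.c2] (by simp [moveShifts])
  have h43 := gen ![x.c5, -x.c4, 0, 0] (by simp [moveShifts])
  have h34 := gen ![-x.c1, x.c2, 0, 0] (by simp [moveShifts])
  have h14 := gen ![0, -x.c2, x.c3, 0] (by simp [moveShifts])
  fin_cases i <;> refine AddSubgroup.gcd_zsmul_mem ?_ ?_
  · convert neg_mem (add_mem (zsmul_mem h34 x.c4) (zsmul_mem h43 x.c2)) using 1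
    ext j; fin_cases j <;> simp <;> ring
  · convert neg_mem (add_mem (add_mem (add_mem (zsmul_mem h34 x.c4) (zsmul_mem h32 x.c3))
      (zsmul_mem h14 x.c4)) (zsmul_mem h12 x.c3)) using 1
    ext j; fin_cases j <;> simp <;> ring
  · convert neg_mem (add_mem (zsmul_mem h43 x.c1) (zsmul_mem h34 x.c5)) using 1
    ext j; fin_cases j <;> simp <;> ring
  · convert neg_mem (add_mem (add_mem (add_mem (zsmul_mem h43 x.c1) (zsmul_mem h34 x.c5))
      (zsmul_mem h41 x.c3)) (zsmul_mem h14 x.c5)) using 1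
    ext j; fin_cases j <;> simp <;> ring
  · convert neg_mem (add_mem (zsmul_mem h21 x.c2) (zsmul_mem h12 x.c1)) using 1
    ext j; fin_cases j <;> simp <;> ring
  · convert neg_mem (add_mem (add_mem (add_mem (zsmul_mem h21 x.c2) (zsmul_mem h12 x.c1))
      (zsmul_mem h41 x.c2)) (zsmul_mem h14 x.c6)) using 1
    ext j; fin_cases j <;> simp <;> ring
  all_goals exact absurd rfl hi

lemma mem_moveLattice_of_dvd_of_apply_three_eq_zero {x : Tuple} (h12 : IsCoprime x.c1 x.c2)
    (h23 : IsCoprime x.c2 x.c3) (h13 : IsCoprime x.c1 x.c3) {d : Fin 4 → ℤ} (hd3 : d 3 = 0)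
    (hd : x.modulus ∣ x.weight d) : d ∈ x.moveLattice := by
  obtain ⟨a, b, hab⟩ := h12.mul_right h13
  obtain ⟨p, q, hpq⟩ := h23
  obtain ⟨m, hm⟩ := hd
  have hx : x.c2 * x.c3 * b + x.c1 * x.c3 * (a * q) + x.c1 * x.c2 * (a * p) = 1 := by
    linear_combination hab + a * x.c1 * hpq
  have h34 : ![-x.c1, x.c2, 0, 0] ∈ x.moveLattice :=
    AddSubgroup.subset_closure (by simp [moveShifts])
  have h14 : ![0, -x.c2, x.c3, 0] ∈ x.moveLattice :=
    AddSubgroup.subset_closure (by simp [moveShifts])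
  have hsingle : ∀ i : Fin 4, i ≠ 3 → ∀ k : ℤ, k • x.modulus • Pi.single i 1 ∈ x.moveLattice :=
    fun i hi k => zsmul_mem (x.modulus_smul_single_mem hi) k
  -- the coordinates of `d` in the basis `v₃₄, v₁₄, (b, a q, a p)` of `ℤ³`, by Cramer's rule
  -- (its determinant is the left side of `hx`)
  set α := -d 0 * (x.c2 * (a * p) + x.c3 * (a * q)) + x.c3 * b * d 1 + x.c2 * b * d 2
  set β := -x.c1 * (d 1 * (a * p) - d 2 * (a * q)) - x.c2 * (d 0 * (a * p) - d 2 * b)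
  have hcramer : d = α • ![-x.c1, x.c2, 0, 0] + β • ![0, -x.c2, x.c3, 0] +
      ((m * b) • x.modulus • Pi.single 0 1 + (m * (a * q)) • x.modulus • Pi.single 1 1 +
        (m * (a * p)) • x.modulus • Pi.single 2 1) := by
    simp only [weight, AddMonoidHom.coe_mk, ZeroHom.coe_mk, hd3] at hm
    ext i; fin_cases i
    · simp [α, β]; linear_combination (-d 0) * hx + b * hm
    · simp [α, β]; linear_combination (-d 1) * hx + a * q * hm
    · simp [α, β]; linear_combination (-d 2) * hx + a * p * hm
    · simpa using hd3
  rw [hcramer]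
  exact add_mem (add_mem (zsmul_mem h34 α) (zsmul_mem h14 β))
    (add_mem (add_mem (hsingle 0 (by decide) _) (hsingle 1 (by decide) _))
      (hsingle 2 (by decide) _))

theorem mem_moveLattice_iff {x : Tuple} (h12 : IsCoprime x.c1 x.c2) (h23 : IsCoprime x.c2 x.c3)
    (h13 : IsCoprime x.c1 x.c3) {d : Fin 4 → ℤ} : d ∈ x.moveLattice ↔ x.modulus ∣ x.weight d := by
  have hweight {v} (hv : v ∈ x.moveLattice) : x.modulus ∣ x.weight v :=
    Int.mem_zmultiples_iff.1 (x.moveLattice_le_comap_weight hv)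
  refine ⟨hweight, fun hd => ?_⟩
  have ⟨u, w, huw⟩ := h12
  -- a vector of `L` with last coordinate `-1`
  set e : Fin 4 → ℤ := u • ![0, 0, x.c5, -x.c1] - w • ![0, 0, -x.c4, x.c2]
  have he : e ∈ x.moveLattice := sub_mem
    (zsmul_mem (AddSubgroup.subset_closure (by simp [moveShifts])) u)
    (zsmul_mem (AddSubgroup.subset_closure (by simp [moveShifts])) w)
  have hde : d + d 3 • e ∈ x.moveLattice := by
    refine mem_moveLattice_of_dvd_of_apply_three_eq_zero h12 h23 h13 ?_ ?_
    · simp [e]; linear_combination (-d 3) * huw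
    · rw [map_add]; exact dvd_add hd (hweight (zsmul_mem he _))
  simpa using sub_mem hde (zsmul_mem he (d 3))

end Tuple

/-- Classification when c₁, c₂, c₃ are pairwise relatively prime: two tuples with the
same c-coordinates are ψ-equivalent iff
c₁c₂f₃+c₁c₃f₂+c₂c₃f₁+c₂c₅f₄ ≡ c₁c₂f₃′+c₁c₃f₂′+c₂c₃f₁′+c₂c₅f₄′
(mod gcd(c₁c₄−c₂c₅, c₁c₄−c₃c₆)), the congruence modulo 0 meaning equality. -/
theorem classification_coprime (c1 c2 c3 c4 c5 c6 f1 f2 f3 f4 t1 t2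
      f1' f2' f3' f4' t1' t2' : ℤ)
    (h12 : Int.gcd c1 c2 = 1) (h23 : Int.gcd c2 c3 = 1) (h13 : Int.gcd c1 c3 = 1) :
    PsiEquiv ⟨c1, c2, c3, c4, c5, c6, f1, f2, f3, f4, t1, t2⟩
        ⟨c1, c2, c3, c4, c5, c6, f1', f2', f3', f4', t1', t2'⟩ ↔
      (Int.gcd (c1 * c4 - c2 * c5) (c1 * c4 - c3 * c6) : ℤ) ∣
        (c1 * c2 * f3 + c1 * c3 * f2 + c2 * c3 * f1 + c2 * c5 * f4) -
          (c1 * c2 * f3' + c1 * c3 * f2' + c2 * c3 * f1' + c2 * c5 * f4') := by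
  set x : Tuple := ⟨c1, c2, c3, c4, c5, c6, f1, f2, f3, f4, t1, t2⟩
  have h12 : IsCoprime x.c1 x.c2 := Int.isCoprime_iff_gcd_eq_one.2 h12
  have h23 : IsCoprime x.c2 x.c3 := Int.isCoprime_iff_gcd_eq_one.2 h23
  have h13 : IsCoprime x.c1 x.c3 := Int.isCoprime_iff_gcd_eq_one.2 h13
  change PsiEquiv x (x.withFT ![f1', f2', f3', f4'] (t1', t2')) ↔ _
  rw [Tuple.psiEquiv_withFT_iff h12 (h13.symm.mul_right h23.symm),
    Tuple.mem_moveLattice_iff h12 h23 h13, ← dvd_neg, ← map_neg, neg_sub]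
  apply Iff.of_eq; congr 1
  simp [x, Tuple.weight, Tuple.fVec]
  ring
end

section
/- If (c₁,c₂,c₃) ≠ (0,0,0), then every tuple (c₁,…,c₆,f₁,…,f₄,t₁,t₂) ∈ ℤ¹² is ψ-equivalent to a tuple whose f₄-coordinate f₄′ satisfies 0 ≤ f₄′ < gcd(c₁,c₂,c₃). -/
/-! The moves ψ₂₁, ψ₁₂, ψ₂₃ fix every cᵢ and shift f₄ by −c₁, c₂, c₃ respectively, so their
integer powers move f₄ through the whole coset f₄ + c₁ℤ + c₂ℤ + c₃ℤ = f₄ + gcd(c₁,c₂,c₃)ℤ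
(Bézout), which contains the least nonnegative residue of f₄ modulo the gcd. -/

theorem Equivalence.rel_zpow_apply {α : Type*} {r : α → α → Prop} (hr : Equivalence r)
    {g : Equiv.Perm α} (hg : ∀ x, r x (g x)) (n : ℤ) (x : α) : r x ((g ^ n) x) := by
  induction n using Int.induction_on generalizing x with
  | zero => exact hr.refl x
  | succ n ih =>
    rw [zpow_add_one, Equiv.Perm.mul_apply]
    exact hr.trans (hg x) (ih (g x))
  | pred n ih =>
    rw [zpow_sub_one, Equiv.Perm.mul_apply]
    exact hr.trans (hr.symm (by simpa using hg (g⁻¹ x))) (ih (g⁻¹ x))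

theorem Equiv.Perm.apply_zpow_apply_eq_add_zsmul {α G : Type*} [AddCommGroup G]
    (g : Equiv.Perm α) {φ a : α → G} (hφ : ∀ x, φ (g x) = φ x + a x)
    (ha : ∀ x, a (g x) = a x) (n : ℤ) (x : α) : φ ((g ^ n) x) = φ x + n • a x := by
  induction n using Int.induction_on generalizing x with
  | zero => simp
  | succ n ih =>
    rw [zpow_add_one, Equiv.Perm.mul_apply, ih, hφ, ha, add_zsmul, one_zsmul]
    abel
  | pred n ih =>
    have ha' : a (g⁻¹ x) = a x := by simpa using (ha (g⁻¹ x)).symm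
    have hφ' : φ (g⁻¹ x) = φ x - a x := by
      rw [← ha', eq_sub_iff_add_eq, ← hφ]
      simp
    rw [zpow_sub_one, Equiv.Perm.mul_apply, ih, hφ', ha', sub_zsmul, one_zsmul]
    abel

theorem psiEquiv_equivalence : Equivalence PsiEquiv :=
  Relation.EqvGen.is_equivalence _

theorem psiEquiv_zpow_apply {g : Equiv.Perm Tuple} (hg : g ∈ psiMoves) (n : ℤ) (T : Tuple) :
    PsiEquiv T ((g ^ n) T) :=
  psiEquiv_equivalence.rel_zpow_apply (fun _ => Relation.EqvGen.rel _ _ ⟨g, hg, rfl⟩) n T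

theorem PsiEquiv.c_eq {T T' : Tuple} (h : PsiEquiv T T') :
    T'.c1 = T.c1 ∧ T'.c2 = T.c2 ∧ T'.c3 = T.c3 := by
  induction h with
  | rel x y hxy =>
    obtain ⟨g, hg, rfl⟩ := hxy
    simp only [psiMoves, List.mem_cons, List.not_mem_nil, or_false] at hg
    rcases hg with rfl | rfl | rfl | rfl | rfl | rfl | rfl | rfl <;> exact ⟨rfl, rfl, rfl⟩
  | refl => exact ⟨rfl, rfl, rfl⟩
  | symm _ _ _ ih => exact ⟨ih.1.symm, ih.2.1.symm, ih.2.2.symm⟩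
  | trans _ _ _ _ _ ih₁ ih₂ =>
    exact ⟨ih₂.1.trans ih₁.1, ih₂.2.1.trans ih₁.2.1, ih₂.2.2.trans ih₁.2.2⟩

theorem exists_psiEquiv_f4_eq_add_mul (T : Tuple) {d : ℤ}
    (hd : d = T.c1 ∨ d = T.c2 ∨ d = T.c3) (n : ℤ) :
    ∃ T', PsiEquiv T T' ∧ T'.f4 = T.f4 + n * d := by
  rcases hd with rfl | rfl | rfl
  · refine ⟨(psi21 ^ (-n)) T, psiEquiv_zpow_apply (by simp [psiMoves]) _ T, ?_⟩
    rw [psi21.apply_zpow_apply_eq_add_zsmul (φ := Tuple.f4) (a := fun x => -x.c1)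
      (fun _ => sub_eq_add_neg _ _) (fun _ => rfl), smul_eq_mul, neg_mul_neg]
  · refine ⟨(psi12 ^ n) T, psiEquiv_zpow_apply (by simp [psiMoves]) _ T, ?_⟩
    rw [psi12.apply_zpow_apply_eq_add_zsmul (φ := Tuple.f4) (a := Tuple.c2)
      (fun _ => rfl) (fun _ => rfl), smul_eq_mul]
  · refine ⟨(psi23 ^ n) T, psiEquiv_zpow_apply (by simp [psiMoves]) _ T, ?_⟩
    rw [psi23.apply_zpow_apply_eq_add_zsmul (φ := Tuple.f4) (a := Tuple.c3)
      (fun _ => rfl) (fun _ => rfl), smul_eq_mul]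

theorem exists_psiEquiv_f4_eq_add_linear_combination (T : Tuple) (x y z : ℤ) :
    ∃ T', PsiEquiv T T' ∧ T'.f4 = T.f4 + (x * T.c1 + y * T.c2 + z * T.c3) := by
  obtain ⟨T₁, h₁, hf₁⟩ := exists_psiEquiv_f4_eq_add_mul T (Or.inl rfl) x
  obtain ⟨T₂, h₂, hf₂⟩ := exists_psiEquiv_f4_eq_add_mul T₁ (Or.inr (Or.inl rfl)) y
  obtain ⟨T₃, h₃, hf₃⟩ := exists_psiEquiv_f4_eq_add_mul T₂ (Or.inr (Or.inr rfl)) z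
  obtain ⟨-, hc₂, hc₃⟩ := h₁.c_eq
  obtain ⟨-, -, hc₃'⟩ := h₂.c_eq
  refine ⟨T₃, psiEquiv_equivalence.trans (psiEquiv_equivalence.trans h₁ h₂) h₃, ?_⟩
  rw [hf₃, hf₂, hf₁, hc₃', hc₃, hc₂]
  ring

theorem Int.exists_linear_combination_eq_gcd (a b c : ℤ) :
    ∃ x y z : ℤ, x * a + y * b + z * c = (Int.gcd a (Int.gcd b c) : ℤ) :=
  ⟨a.gcdA (b.gcd c), b.gcdA c * a.gcdB (b.gcd c), b.gcdB c * a.gcdB (b.gcd c), by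
    rw [Int.gcd_eq_gcd_ab a, Int.gcd_eq_gcd_ab b c]; ring⟩

theorem exists_psiEquiv_f4_eq_add_of_gcd_dvd (T : Tuple) {k : ℤ}
    (hk : (Int.gcd T.c1 (Int.gcd T.c2 T.c3) : ℤ) ∣ k) :
    ∃ T', PsiEquiv T T' ∧ T'.f4 = T.f4 + k := by
  obtain ⟨q, rfl⟩ := hk
  obtain ⟨x, y, z, hxyz⟩ := Int.exists_linear_combination_eq_gcd T.c1 T.c2 T.c3
  rw [← hxyz]
  convert exists_psiEquiv_f4_eq_add_linear_combination T (x * q) (y * q) (z * q) using 4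
  ring

/-- If (c₁,c₂,c₃) ≠ (0,0,0), every tuple is ψ-equivalent to one whose f₄-coordinate
lies in [0, gcd(c₁,c₂,c₃)). -/
theorem f4_normalization (T : Tuple) (h : ¬(T.c1 = 0 ∧ T.c2 = 0 ∧ T.c3 = 0)) :
    ∃ T' : Tuple, PsiEquiv T T' ∧ 0 ≤ T'.f4 ∧
      T'.f4 < (Int.gcd T.c1 (Int.gcd T.c2 T.c3) : ℤ) := by
  set g : ℤ := (Int.gcd T.c1 (Int.gcd T.c2 T.c3) : ℤ)
  have hg : 0 < g := by
    refine Int.natCast_pos.mpr (Nat.pos_of_ne_zero fun h0 => h ?_)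
    simp only [Int.gcd_eq_zero_iff, Int.natCast_eq_zero] at h0
    exact ⟨h0.1, h0.2.1, h0.2.2⟩
  obtain ⟨T', hT', hf4⟩ :=
    exists_psiEquiv_f4_eq_add_of_gcd_dvd T (dvd_neg.mpr (dvd_mul_right g (T.f4 / g)))
  have hmod : T'.f4 = T.f4 % g := by rw [hf4, Int.emod_def, sub_eq_add_neg]
  exact ⟨T', hT', hmod ▸ Int.emod_nonneg _ hg.ne', hmod ▸ Int.emod_lt_of_pos _ hg⟩
end
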